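/- arXiv:1812.03773 — 3 statements merged into one kernel-verified Lean document; each statement's English description precedes it below -/
import Mathlib

section
/- Let x ∈ (ℝ^m)^{|V|} satisfy ‖P_{D^⊥} x‖² ≤ θ_D ‖x‖² with θ_D ∈ (0,1), where D is the diagonal subspace and all components of P_D x equal a ∈ ℝ^m. Then for every i ∈ V: (1 − sqrt(θ_D |V| /(1−θ_D))) ‖a‖ ≤ ‖x_i‖ ≤ (1 + sqrt(θ_D |V|/(1−θ_D))) ‖a‖. -/
/-!
Write `a` for the mean of the `x i`. Since the deviations `x i - a` sum to zero, Pythagoras gives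
`∑ ‖x i‖² = ∑ ‖x i - a‖² + |V| ‖a‖²`, so the hypothesis becomes
`(1 - θ) ∑ ‖x i - a‖² ≤ θ |V| ‖a‖²`. Each single deviation is then at most
`sqrt (θ |V| / (1 - θ)) ‖a‖`, and the triangle inequality finishes the proof.
-/

open Finset

section Mean

variable {ι E : Type*} [Fintype ι] [NormedAddCommGroup E] [InnerProductSpace ℝ E]

theorem sum_sub_mean_eq_zero (x : ι → E) :
    ∑ i, (x i - (Fintype.card ι : ℝ)⁻¹ • ∑ j, x j) = 0 := by
  rw [sum_sub_distrib, sum_const, card_univ, ← Nat.cast_smul_eq_nsmul ℝ, smul_smul, sub_eq_zero]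
  rcases (Fintype.card ι).eq_zero_or_pos with hι | hι
  · have := Fintype.card_eq_zero_iff.mp hι
    simp
  · rw [mul_inv_cancel₀ (by positivity), one_smul]

theorem sum_norm_sq_eq_sum_norm_sub_mean_sq_add (x : ι → E) :
    ∑ i, ‖x i‖ ^ 2 = ∑ i, ‖x i - (Fintype.card ι : ℝ)⁻¹ • ∑ j, x j‖ ^ 2
      + Fintype.card ι * ‖(Fintype.card ι : ℝ)⁻¹ • ∑ j, x j‖ ^ 2 := by
  set a := (Fintype.card ι : ℝ)⁻¹ • ∑ j, x j
  have hx : ∀ i, ‖x i‖ ^ 2 = ‖x i - a‖ ^ 2 + 2 * inner ℝ (x i - a) a + ‖a‖ ^ 2 := fun i => by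
    simpa using norm_add_sq_real (x i - a) a
  have hcross : ∑ i, 2 * inner ℝ (x i - a) a = 0 := by
    rw [← mul_sum, ← sum_inner, sum_sub_mean_eq_zero, inner_zero_left, mul_zero]
  simp only [hx, sum_add_distrib, hcross, add_zero, sum_const, card_univ, nsmul_eq_mul]

theorem norm_sub_mean_le_of_sum_norm_sub_mean_sq_le (x : ι → E) {θ : ℝ} (hθ : θ < 1)
    (h : ∑ i, ‖x i - (Fintype.card ι : ℝ)⁻¹ • ∑ j, x j‖ ^ 2 ≤ θ * ∑ i, ‖x i‖ ^ 2) (i : ι) :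
    ‖x i - (Fintype.card ι : ℝ)⁻¹ • ∑ j, x j‖
      ≤ Real.sqrt (θ * Fintype.card ι / (1 - θ)) * ‖(Fintype.card ι : ℝ)⁻¹ • ∑ j, x j‖ := by
  set a := (Fintype.card ι : ℝ)⁻¹ • ∑ j, x j
  rw [sum_norm_sq_eq_sum_norm_sub_mean_sq_add x] at h
  have hsingle : ‖x i - a‖ ^ 2 ≤ ∑ j, ‖x j - a‖ ^ 2 :=
    single_le_sum (f := fun j => ‖x j - a‖ ^ 2) (fun j _ => sq_nonneg _) (mem_univ i)
  have hsq : ‖x i - a‖ ^ 2 ≤ θ * Fintype.card ι / (1 - θ) * ‖a‖ ^ 2 := by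
    rw [div_mul_eq_mul_div, le_div_iff₀ (sub_pos.mpr hθ)]
    nlinarith
  calc ‖x i - a‖ = Real.sqrt (‖x i - a‖ ^ 2) := (Real.sqrt_sq (norm_nonneg _)).symm
    _ ≤ Real.sqrt (θ * Fintype.card ι / (1 - θ) * ‖a‖ ^ 2) := Real.sqrt_le_sqrt hsq
    _ = Real.sqrt (θ * Fintype.card ι / (1 - θ)) * ‖a‖ := by
      rw [Real.sqrt_mul' _ (sq_nonneg _), Real.sqrt_sq (norm_nonneg _)]

end Mean

theorem stmt7_general {V : Type*} [Fintype V] {m : ℕ}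
    (x : V → EuclideanSpace ℝ (Fin m)) (θD : ℝ) (hθ : θD ∈ Set.Ioo (0:ℝ) 1)
    (a : EuclideanSpace ℝ (Fin m))
    (ha : a = ((Fintype.card V : ℝ))⁻¹ • ∑ i, x i)
    (h : ∑ i, ‖x i - a‖^2 ≤ θD * ∑ i, ‖x i‖^2) :
    ∀ i, (1 - Real.sqrt (θD * (Fintype.card V) / (1 - θD))) * ‖a‖ ≤ ‖x i‖ ∧
         ‖x i‖ ≤ (1 + Real.sqrt (θD * (Fintype.card V) / (1 - θD))) * ‖a‖ := by
  intro i
  have hdev : ‖x i - a‖ ≤ Real.sqrt (θD * Fintype.card V / (1 - θD)) * ‖a‖ := by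
    subst ha
    exact norm_sub_mean_le_of_sum_norm_sub_mean_sq_le x hθ.2 h i
  constructor
  · linarith [norm_sub_norm_le a (x i), norm_sub_rev (x i) a]
  · linarith [norm_le_norm_add_norm_sub' (x i) a]

/-- If `Σ_i ‖x_i − a‖² ≤ θ_D Σ_i ‖x_i‖²` where `a` is the average of the `x_i`
(i.e. `‖P_{D^⊥}x‖² ≤ θ_D‖x‖²` for the diagonal subspace `D`), then each `‖x_i‖` is within
the factor `1 ± sqrt(θ_D|V|/(1−θ_D))` of `‖a‖`. -/
theorem stmt7 {V : Type*} [Fintype V] [Nonempty V] {m : ℕ}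
    (x : V → EuclideanSpace ℝ (Fin m)) (θD : ℝ) (hθ : θD ∈ Set.Ioo (0:ℝ) 1)
    (a : EuclideanSpace ℝ (Fin m))
    (ha : a = ((Fintype.card V : ℝ))⁻¹ • ∑ i, x i)
    (h : ∑ i, ‖x i - a‖^2 ≤ θD * ∑ i, ‖x i‖^2) :
    ∀ i, (1 - Real.sqrt (θD * (Fintype.card V) / (1 - θD))) * ‖a‖ ≤ ‖x i‖ ∧
         ‖x i‖ ≤ (1 + Real.sqrt (θD * (Fintype.card V) / (1 - θD))) * ‖a‖ :=
  stmt7_general x θD hθ a ha h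
end

section
/- Let P := {x ∈ ℝ^m : ⟨u, x⟩ ≤ ε, ⟨v, x⟩ ≤ 0} where u, v are nonzero and ε ≥ 0, and let C ⊆ P be closed convex with δ_P*(z⁰) = δ_C*(z⁰) for a given z⁰. Then δ_P*(w) ≥ δ_C*(w) for all w, and for any point y, the Dykstra-type decrease inequality holds: ½‖y − z⁰‖² + δ_C*(z⁰) ≥ ½‖y − z⁺‖² + δ_C*(z⁺) + ½‖x⁰ − x̃⁺‖², where z̃⁺ = argmin_z ½‖y − z‖² + δ_P*(z), x̃⁺ = y − z̃⁺, x⁰ = y − z⁰, and z⁺ = argmin_z ½‖y − z‖² + δ_C*(z). -/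
/-! The support function of any set is convex, so `z ↦ ½‖y - z‖² + supp S z` is 1-strongly
convex: comparing its minimizer `z` with the points `z + t • (z₀ - z)` and letting `t → 0` gives
`½‖y - z₀‖² + supp S z₀ ≥ ½‖y - z‖² + supp S z + ½‖z₀ - z‖²`. For `S = P` this chains with
`supp C ≤ supp P`, `supp P z0 = supp C z0` and the minimality of `zplus` for `C`. -/

noncomputable section

/-- The support function of a set `S ⊆ ℝ^m`, valued in `EReal`. -/
def supp {m : ℕ} (S : Set (EuclideanSpace ℝ (Fin m))) (w : EuclideanSpace ℝ (Fin m)) :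
    EReal :=
  ⨆ x ∈ S, ((inner ℝ w x : ℝ) : EReal)

open Filter Topology Set

lemma nonpos_of_forall_mul_le_sq_mul {a b : ℝ} (h : ∀ t ∈ Ioo (0 : ℝ) 1, t * a ≤ t ^ 2 * b) :
    a ≤ 0 := by
  have hlim : Tendsto (fun t : ℝ => t * b) (𝓝[>] 0) (𝓝 0) := by
    simpa using ((continuous_mul_const b).tendsto 0).mono_left nhdsWithin_le_nhds
  refine ge_of_tendsto hlim (eventually_of_mem (Ioo_mem_nhdsGT one_pos) fun t ht => ?_)
  have hta := h t ht
  rw [pow_two, mul_assoc] at hta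
  exact le_of_mul_le_mul_left hta ht.1

namespace supp

variable {m : ℕ} {S T : Set (EuclideanSpace ℝ (Fin m))} {w : EuclideanSpace ℝ (Fin m)}

lemma mono (h : S ⊆ T) : supp S w ≤ supp T w :=
  iSup_le_iSup_of_subset h

lemma eq_bot_iff : supp S w = ⊥ ↔ S = ∅ := by
  simp [supp, Set.eq_empty_iff_forall_notMem]

lemma le_coe_iff {A : ℝ} : supp S w ≤ A ↔ ∀ x ∈ S, inner ℝ w x ≤ A := by
  simp [supp]

lemma add_smul_sub_le {a b : EuclideanSpace ℝ (Fin m)} {A B t : ℝ}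
    (ha : supp S a ≤ A) (hb : supp S b ≤ B) (ht₀ : 0 ≤ t) (ht₁ : t ≤ 1) :
    supp S (a + t • (b - a)) ≤ ((1 - t) * A + t * B : ℝ) := by
  rw [le_coe_iff] at ha hb ⊢
  intro x hx
  have hinner : inner ℝ (a + t • (b - a)) x = (1 - t) * inner ℝ a x + t * inner ℝ b x := by
    rw [inner_add_left, real_inner_smul_left, inner_sub_left]; ring
  rw [hinner]
  exact add_le_add (mul_le_mul_of_nonneg_left (ha x hx) (by linarith))
    (mul_le_mul_of_nonneg_left (hb x hx) ht₀)

lemma half_sq_add_le_of_isMin_of_eq_coe {y z₀ z : EuclideanSpace ℝ (Fin m)} {A B : ℝ}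
    (hA : supp S z₀ = A) (hB : supp S z = B)
    (hmin : ∀ w, ((1/2 * ‖y - z‖^2 : ℝ) : EReal) + supp S z ≤
        ((1/2 * ‖y - w‖^2 : ℝ) : EReal) + supp S w) :
    1/2 * ‖y - z‖^2 + B + 1/2 * ‖z₀ - z‖^2 ≤ 1/2 * ‖y - z₀‖^2 + A := by
  set d := z₀ - z
  have hsq : ∀ t : ℝ,
      ‖y - (z + t • d)‖^2 = ‖y - z‖^2 - 2 * t * inner ℝ (y - z) d + t^2 * ‖d‖^2 := by
    intro t
    rw [← sub_sub, norm_sub_sq_real, real_inner_smul_right, norm_smul, mul_pow,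
      Real.norm_eq_abs, sq_abs]
    ring
  have hslope : ∀ t ∈ Ioo (0 : ℝ) 1,
      t * (B - A + inner ℝ (y - z) d) ≤ t^2 * (1/2 * ‖d‖^2) := by
    intro t ht
    have hconv := add_smul_sub_le hB.le hA.le ht.1.le ht.2.le
    have hstep := (hmin (z + t • d)).trans (add_le_add le_rfl hconv)
    rw [hB, ← EReal.coe_add, ← EReal.coe_add, EReal.coe_le_coe_iff, hsq] at hstep
    linarith
  have hderiv := nonpos_of_forall_mul_le_sq_mul hslope
  have hsq₀ : ‖y - z₀‖^2 = ‖y - z‖^2 - 2 * inner ℝ (y - z) d + ‖d‖^2 := by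
    simpa [d] using hsq 1
  linarith

lemma half_sq_add_le_of_isMin_ereal {y z₀ z : EuclideanSpace ℝ (Fin m)}
    (hmin : ∀ w, ((1/2 * ‖y - z‖^2 : ℝ) : EReal) + supp S z ≤
        ((1/2 * ‖y - w‖^2 : ℝ) : EReal) + supp S w) :
    ((1/2 * ‖y - z‖^2 : ℝ) : EReal) + supp S z + ((1/2 * ‖z₀ - z‖^2 : ℝ) : EReal) ≤
      ((1/2 * ‖y - z₀‖^2 : ℝ) : EReal) + supp S z₀ := by
  induction hA : supp S z₀ using EReal.rec with
  | bot =>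
    rw [eq_bot_iff] at hA
    have hB : supp S z = ⊥ := eq_bot_iff.mpr hA
    simp [hB]
  | top => rw [EReal.add_top_of_ne_bot (EReal.coe_ne_bot _)]; exact le_top
  | coe A =>
    have hB_ne_top : supp S z ≠ ⊤ := by
      intro hB
      have h := hmin z₀
      rw [hB, hA, EReal.add_top_of_ne_bot (EReal.coe_ne_bot _), ← EReal.coe_add] at h
      exact not_le.mpr (EReal.coe_lt_top _) h
    have hB_ne_bot : supp S z ≠ ⊥ := by
      rw [Ne, eq_bot_iff, ← eq_bot_iff (w := z₀), hA]
      exact EReal.coe_ne_bot A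
    obtain ⟨B, hB⟩ : ∃ B : ℝ, supp S z = B :=
      ⟨_, (EReal.coe_toReal hB_ne_top hB_ne_bot).symm⟩
    rw [hB, ← EReal.coe_add, ← EReal.coe_add, ← EReal.coe_add, EReal.coe_le_coe_iff]
    exact half_sq_add_le_of_isMin_of_eq_coe hA hB hmin

end supp

theorem stmt12_general {m : ℕ}
    (P C : Set (EuclideanSpace ℝ (Fin m)))
    (hCP : C ⊆ P)
    (y z0 zt zplus x0 xt : EuclideanSpace ℝ (Fin m))
    (hx0 : x0 = y - z0) (hxt : xt = y - zt)
    (hz0 : supp P z0 = supp C z0)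
    (hztmin : ∀ w, ((1/2 * ‖y - zt‖^2 : ℝ) : EReal) + supp P zt ≤
        ((1/2 * ‖y - w‖^2 : ℝ) : EReal) + supp P w)
    (hzpmin : ∀ w, ((1/2 * ‖y - zplus‖^2 : ℝ) : EReal) + supp C zplus ≤
        ((1/2 * ‖y - w‖^2 : ℝ) : EReal) + supp C w) :
    (∀ w, supp C w ≤ supp P w) ∧
    ((1/2 * ‖y - z0‖^2 : ℝ) : EReal) + supp C z0 ≥
      ((1/2 * ‖y - zplus‖^2 : ℝ) : EReal) + supp C zplus +
        ((1/2 * ‖x0 - xt‖^2 : ℝ) : EReal) := by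
  refine ⟨fun w => supp.mono hCP, ?_⟩
  have hx : ‖x0 - xt‖ = ‖z0 - zt‖ := by
    rw [hx0, hxt, sub_sub_sub_cancel_left, norm_sub_rev]
  rw [hx, ← hz0, ge_iff_le]
  calc ((1/2 * ‖y - zplus‖^2 : ℝ) : EReal) + supp C zplus + ((1/2 * ‖z0 - zt‖^2 : ℝ) : EReal)
      ≤ ((1/2 * ‖y - zt‖^2 : ℝ) : EReal) + supp C zt + ((1/2 * ‖z0 - zt‖^2 : ℝ) : EReal) :=
        add_le_add (hzpmin zt) le_rfl
    _ ≤ ((1/2 * ‖y - zt‖^2 : ℝ) : EReal) + supp P zt + ((1/2 * ‖z0 - zt‖^2 : ℝ) : EReal) :=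
        add_le_add (add_le_add le_rfl (supp.mono hCP)) le_rfl
    _ ≤ ((1/2 * ‖y - z0‖^2 : ℝ) : EReal) + supp P z0 :=
        supp.half_sq_add_le_of_isMin_ereal hztmin

/-- Dykstra-type decrease inequality for an outer polyhedral approximation
`P = {x : ⟨u,x⟩ ≤ ε, ⟨v,x⟩ ≤ 0} ⊇ C` with `δ_P*(z⁰) = δ_C*(z⁰)`. -/
theorem stmt12 {m : ℕ} (u v : EuclideanSpace ℝ (Fin m)) (hu : u ≠ 0) (hv : v ≠ 0)
    (ε : ℝ) (hε : 0 ≤ ε)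
    (P C : Set (EuclideanSpace ℝ (Fin m)))
    (hP : P = {x | (inner ℝ u x : ℝ) ≤ ε ∧ (inner ℝ v x : ℝ) ≤ 0})
    (hCP : C ⊆ P) (hCc : IsClosed C) (hCv : Convex ℝ C) (hCne : C.Nonempty)
    (y z0 zt zplus x0 xt : EuclideanSpace ℝ (Fin m))
    (hx0 : x0 = y - z0) (hxt : xt = y - zt)
    (hz0 : supp P z0 = supp C z0)
    (hztmin : ∀ w, ((1/2 * ‖y - zt‖^2 : ℝ) : EReal) + supp P zt ≤
        ((1/2 * ‖y - w‖^2 : ℝ) : EReal) + supp P w)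
    (hzpmin : ∀ w, ((1/2 * ‖y - zplus‖^2 : ℝ) : EReal) + supp C zplus ≤
        ((1/2 * ‖y - w‖^2 : ℝ) : EReal) + supp C w) :
    (∀ w, supp C w ≤ supp P w) ∧
    ((1/2 * ‖y - z0‖^2 : ℝ) : EReal) + supp C z0 ≥
      ((1/2 * ‖y - zplus‖^2 : ℝ) : EReal) + supp C zplus +
        ((1/2 * ‖x0 - xt‖^2 : ℝ) : EReal) :=
  stmt12_general P C hCP y z0 zt zplus x0 xt hx0 hxt hz0 hztmin hzpmin
end
end

section
/- Let d, x, a ∈ ℝ^m with d = P_{Z^⊥} a for a subspace Z, ‖P_Z a‖² ≤ θ_Z ‖a‖², and ‖x − a‖ ≤ sqrt(θ_D|V|/(1−θ_D)) ‖a‖, with ‖x‖ ≤ (1 + sqrt(θ_D|V|/(1−θ_D)))‖a‖. Then ⟨d, x⟩ ≥ ‖d‖ · c · ‖x‖ where c = (sqrt(1−θ_Z) − sqrt(θ_D|V|/(1−θ_D))) / (1 + sqrt(θ_D|V|/(1−θ_D))), provided c > 0. -/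
/-!
Write `d = P_{Zᗮ} a`. Since `d` is orthogonal to `a - d`, `⟪d, a⟫ = ‖d‖²`, and by Pythagoras
`‖d‖ ≥ √(1 - θ_Z) ‖a‖`. With `s = √(θ_D |V| / (1 - θ_D))`, Cauchy–Schwarz on `x - a` gives
`⟪d, x⟫ ≥ ‖d‖² - ‖d‖ s ‖a‖ ≥ ‖d‖ (√(1 - θ_Z) - s) ‖a‖ = ‖d‖ c (1 + s) ‖a‖ ≥ ‖d‖ c ‖x‖`.
-/

open RealInnerProductSpace

section InnerProductSpace

variable {E : Type*} [NormedAddCommGroup E] [InnerProductSpace ℝ E]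

theorem Submodule.real_inner_starProjection_self (K : Submodule ℝ E) [K.HasOrthogonalProjection]
    (a : E) : ⟪K.starProjection a, a⟫ = ‖K.starProjection a‖ ^ 2 := by
  have hperp : ⟪a - K.starProjection a, K.starProjection a⟫ = 0 :=
    K.starProjection_inner_eq_zero a _ (K.starProjection_apply_mem a)
  rw [inner_sub_left, sub_eq_zero, real_inner_comm, real_inner_self_eq_norm_sq] at hperp
  exact hperp

theorem Submodule.sqrt_one_sub_mul_norm_le_norm_starProjection_orthogonal
    (K : Submodule ℝ E) [K.HasOrthogonalProjection] {a : E} {θ : ℝ}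
    (h : ‖K.starProjection a‖ ^ 2 ≤ θ * ‖a‖ ^ 2) :
    √(1 - θ) * ‖a‖ ≤ ‖Kᗮ.starProjection a‖ := by
  have hsq : (1 - θ) * ‖a‖ ^ 2 ≤ ‖Kᗮ.starProjection a‖ ^ 2 := by
    nlinarith [K.norm_sq_eq_add_norm_sq_starProjection a]
  calc √(1 - θ) * ‖a‖ = √((1 - θ) * ‖a‖ ^ 2) := by
        rw [Real.sqrt_mul' _ (sq_nonneg _), Real.sqrt_sq (norm_nonneg _)]
    _ ≤ √(‖Kᗮ.starProjection a‖ ^ 2) := Real.sqrt_le_sqrt hsq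
    _ = ‖Kᗮ.starProjection a‖ := Real.sqrt_sq (norm_nonneg _)

theorem norm_mul_sub_norm_le_real_inner {a d x : E} (hda : ⟪d, a⟫ = ‖d‖ ^ 2) :
    ‖d‖ * (‖d‖ - ‖x - a‖) ≤ ⟪d, x⟫ := by
  have hsplit : ⟪d, x⟫ = ‖d‖ ^ 2 + ⟪d, x - a⟫ := by
    rw [inner_sub_right, hda]; ring
  have hcs : -(‖d‖ * ‖x - a‖) ≤ ⟪d, x - a⟫ := (abs_le.mp (abs_real_inner_le_norm d _)).1
  linarith

theorem norm_mul_mul_norm_le_real_inner {a d x : E} {r s c : ℝ} (hda : ⟪d, a⟫ = ‖d‖ ^ 2)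
    (hd : r * ‖a‖ ≤ ‖d‖) (hxa : ‖x - a‖ ≤ s * ‖a‖) (hx : ‖x‖ ≤ (1 + s) * ‖a‖)
    (hc : c * (1 + s) = r - s) (hc0 : 0 ≤ c) :
    ‖d‖ * c * ‖x‖ ≤ ⟪d, x⟫ :=
  calc ‖d‖ * c * ‖x‖ ≤ ‖d‖ * c * ((1 + s) * ‖a‖) := by gcongr
    _ = ‖d‖ * (r * ‖a‖ - s * ‖a‖) := by rw [← sub_mul, ← hc]; ring
    _ ≤ ‖d‖ * (‖d‖ - ‖x - a‖) := by gcongr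
    _ ≤ ⟪d, x⟫ := norm_mul_sub_norm_le_real_inner hda

end InnerProductSpace

theorem stmt15_general {m : ℕ} (Z : Submodule ℝ (EuclideanSpace ℝ (Fin m)))
    (θZ θD : ℝ)
    (nV : ℕ)
    (a x d : EuclideanSpace ℝ (Fin m))
    (hd : d = (Submodule.orthogonalProjection Zᗮ a : EuclideanSpace ℝ (Fin m)))
    (hZ : ‖(Submodule.orthogonalProjection Z a : EuclideanSpace ℝ (Fin m))‖^2 ≤ θZ * ‖a‖^2)
    (hxa : ‖x - a‖ ≤ Real.sqrt (θD * nV / (1 - θD)) * ‖a‖)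
    (hx : ‖x‖ ≤ (1 + Real.sqrt (θD * nV / (1 - θD))) * ‖a‖)
    (c : ℝ)
    (hc : c = (Real.sqrt (1 - θZ) - Real.sqrt (θD * nV / (1 - θD))) /
        (1 + Real.sqrt (θD * nV / (1 - θD))))
    (hcpos : 0 < c) :
    (inner ℝ d x : ℝ) ≥ ‖d‖ * c * ‖x‖ := by
  set s := √(θD * nV / (1 - θD))
  have hcs : c * (1 + s) = √(1 - θZ) - s := by
    rw [hc]; field_simp [(by positivity : (0 : ℝ) < 1 + s).ne']
  rw [← Submodule.starProjection_apply] at hd hZ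
  subst hd
  exact norm_mul_mul_norm_le_real_inner (Zᗮ.real_inner_starProjection_self a)
    (Z.sqrt_one_sub_mul_norm_le_norm_starProjection_orthogonal hZ) hxa hx hcs hcpos.le

/-- Lower bound `⟨d, x⟩ ≥ ‖d‖ c ‖x‖` for `d = P_{Z^⊥} a` when `‖P_Z a‖² ≤ θ_Z‖a‖²` and
`x` is close to `a`. -/
theorem stmt15 {m : ℕ} (Z : Submodule ℝ (EuclideanSpace ℝ (Fin m)))
    (θZ θD : ℝ) (hθZ : θZ ∈ Set.Ioo (0:ℝ) 1) (hθD : θD ∈ Set.Ioo (0:ℝ) 1)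
    (nV : ℕ) (hV : 1 ≤ nV)
    (a x d : EuclideanSpace ℝ (Fin m))
    (hd : d = (Submodule.orthogonalProjection Zᗮ a : EuclideanSpace ℝ (Fin m)))
    (hZ : ‖(Submodule.orthogonalProjection Z a : EuclideanSpace ℝ (Fin m))‖^2 ≤ θZ * ‖a‖^2)
    (hxa : ‖x - a‖ ≤ Real.sqrt (θD * nV / (1 - θD)) * ‖a‖)
    (hx : ‖x‖ ≤ (1 + Real.sqrt (θD * nV / (1 - θD))) * ‖a‖)
    (c : ℝ)
    (hc : c = (Real.sqrt (1 - θZ) - Real.sqrt (θD * nV / (1 - θD))) /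
        (1 + Real.sqrt (θD * nV / (1 - θD))))
    (hcpos : 0 < c) :
    (inner ℝ d x : ℝ) ≥ ‖d‖ * c * ‖x‖ :=
  stmt15_general Z θZ θD nV a x d hd hZ hxa hx c hc hcpos
end
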